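/- arXiv:2010.07508 — 2 statements merged into one kernel-verified Lean document; each statement's English description precedes it below -/
import Mathlib

section
/- Let U : ℝ^d → ℝ be C² with U(r) ≥ U_min for all r, let b : ℝ^d → ℝ^{d'} satisfy |b(r)| ≤ B for all r, and let A : ℝ^d → ℝ^{d'×d'} be C¹ with symmetric values satisfying vᵀA(r)v ≥ c|v|² for all r, v, where c > 0. Let r_⋆ be a C² solution on [0,t_f] of r̈_⋆ = −∇U(r_⋆) − ∇_r Q(r_⋆, x_⋆) with x_⋆(t) = A(r_⋆(t))⁻¹b(r_⋆(t)), and let E₀ = ½|ṙ_⋆(0)|² + U(r_⋆(0)) − ½ b(r_⋆(0))ᵀA(r_⋆(0))⁻¹b(r_⋆(0)). Then for all t ∈ [0,t_f]: ½|ṙ_⋆(t)|² ≤ E₀ − U_min + B²/(2c). -/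
/-!
Along the exact dynamics the energy `½|ṙ|² + U(r) − ½ bᵀA⁻¹b` is conserved. The reason is an
envelope theorem: `−½ bᵀA⁻¹b = min_x Q(r, x)` with minimiser `x⋆ = A⁻¹b`, so its gradient in `r`
is `∇_r Q(r, x⋆)`, and the equation of motion is Newton's law `r̈ = −∇W(r)` for the potential
`W = U − ½ bᵀA⁻¹b`. Coercivity of `A` gives `bᵀA⁻¹b ≤ |b|²/c ≤ B²/c`, so
`½|ṙ|² = E₀ − U(r) + ½ bᵀA⁻¹b ≤ E₀ − U_min + B²/(2c)`.
-/

open scoped RealInnerProductSpace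
open Set

noncomputable section

attribute [local instance] Matrix.normedAddCommGroup Matrix.normedSpace

/-- The gradient in `r` of `Q(r,x) = ½ xᵀA(r)x − b(r)ᵀx`; its `k`-th component is
`½ xᵀ(∂A/∂r_k)(r)x − (∂b/∂r_k)(r)ᵀx`. -/
noncomputable def gradQ {d n : ℕ}
    (A : EuclideanSpace ℝ (Fin d) → Matrix (Fin n) (Fin n) ℝ)
    (b : EuclideanSpace ℝ (Fin d) → EuclideanSpace ℝ (Fin n))
    (r : EuclideanSpace ℝ (Fin d)) (x : EuclideanSpace ℝ (Fin n)) :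
    EuclideanSpace ℝ (Fin d) :=
  (EuclideanSpace.equiv (Fin d) ℝ).symm fun k =>
    (1/2) * ⟪x, (Matrix.toEuclideanLin (fderiv ℝ A r (EuclideanSpace.single k 1))) x⟫
      - ⟪fderiv ℝ b r (EuclideanSpace.single k 1), x⟫

open scoped Ring

theorem map_ringInverse {R S F : Type*} [Semiring R] [Semiring S] [EquivLike F R S]
    [RingEquivClass F R S] (f : F) (a : R) : f a⁻¹ʳ = (f a)⁻¹ʳ := by
  by_cases ha : IsUnit a
  · obtain ⟨u, rfl⟩ := ha
    have h := Ring.inverse_unit (Units.map (f : R →* S) u)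
    simp only [Units.coe_map, Units.coe_map_inv, MonoidHom.coe_coe] at h
    rw [Ring.inverse_unit, h]
  · rw [Ring.inverse_non_unit _ ha, Ring.inverse_non_unit _ ((isUnit_map_iff f a).not.2 ha),
      map_zero]

section InnerProductSpace

variable {E F : Type*} [NormedAddCommGroup E] [InnerProductSpace ℝ E] [CompleteSpace E]
  [NormedAddCommGroup F] [NormedSpace ℝ F]

theorem HasFDerivAt.inner_ringInverse_apply {L : F → E →L[ℝ] E} {L' : F →L[ℝ] E →L[ℝ] E}
    {y : F → E} {y' : F →L[ℝ] E} {z : F} (hL : HasFDerivAt L L' z) (hy : HasFDerivAt y y' z)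
    (hunit : IsUnit (L z)) (hsa : IsSelfAdjoint (L z)) :
    HasFDerivAt (fun w => ⟪y w, (L w)⁻¹ʳ (y w)⟫)
      ((innerSL ℝ ((L z)⁻¹ʳ (y z))).comp ((2 : ℝ) • y' - L'.flip ((L z)⁻¹ʳ (y z)))) z := by
  -- `d(L⁻¹) = -L⁻¹ (dL) L⁻¹`; self-adjointness of `L⁻¹` merges the two `y'`-terms.
  obtain ⟨u, hu⟩ := hunit
  have hinv := hasFDerivAt_ringInverse (𝕜 := ℝ) u
  rw [hu] at hinv
  refine (hy.inner ℝ ((hinv.comp z hL).clm_apply hy)).congr_fderiv ?_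
  have hu' : ((u⁻¹ : (E →L[ℝ] E)ˣ) : E →L[ℝ] E) = (L z)⁻¹ʳ := by rw [← Ring.inverse_unit, hu]
  have hadj : ∀ a b, ⟪a, (L z)⁻¹ʳ b⟫ = ⟪(L z)⁻¹ʳ a, b⟫ := fun a b =>
    (hsa.ringInverse.isSymmetric a b).symm
  ext v
  simp only [fderivInnerCLM_apply, hu', ContinuousLinearMap.comp_apply,
    ContinuousLinearMap.prod_apply, add_apply, sub_apply, smul_apply, Function.comp_apply,
    ContinuousLinearMap.flip_apply, neg_apply, ContinuousLinearMap.mulLeftRight_apply,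
    mul_apply_eq_comp, innerSL_apply_apply, inner_add_right, inner_sub_right, inner_neg_right,
    real_inner_smul_right, hadj, real_inner_comm (y' v)]
  ring

theorem energy_eq_of_hasGradientAt {W : E → ℝ} {r : ℝ → E} {a b : ℝ} (hr : ContDiff ℝ 2 r)
    (hW : ∀ t ∈ Icc a b, HasGradientAt W (-deriv (deriv r) t) (r t)) :
    ∀ t ∈ Icc a b, (1/2) * ‖deriv r t‖ ^ 2 + W (r t) = (1/2) * ‖deriv r a‖ ^ 2 + W (r a) := by
  have hr' : ContDiff ℝ 1 (deriv r) := hr.iterate_deriv' 1 1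
  have hderiv : ∀ t ∈ Icc a b,
      HasDerivAt (fun s => (1/2) * ‖deriv r s‖ ^ 2 + W (r s)) 0 t := by
    intro t ht
    have hv := ((hr'.differentiable one_ne_zero) t).hasDerivAt.norm_sq
    have hW' := (hW t ht).hasFDerivAt.comp_hasDerivAt t
      ((hr.differentiable two_ne_zero) t).hasDerivAt
    refine ((hv.const_mul (1/2)).add hW').congr_deriv ?_
    rw [InnerProductSpace.toDual_apply_apply, inner_neg_left, real_inner_comm]
    ring
  exact constant_of_has_deriv_right_zero
    (fun t ht => (hderiv t ht).continuousAt.continuousWithinAt)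
    fun t ht => (hderiv t (Ico_subset_Icc_self ht)).hasDerivWithinAt

end InnerProductSpace

namespace Matrix

variable {n : Type*} [Fintype n] [DecidableEq n]

theorem toEuclideanCLM_nonsing_inv (M : Matrix n n ℝ) :
    toEuclideanCLM (𝕜 := ℝ) M⁻¹ = (toEuclideanCLM (𝕜 := ℝ) M)⁻¹ʳ := by
  rw [nonsing_inv_eq_ringInverse, map_ringInverse]

theorem isUnit_det_of_coercive {M : Matrix n n ℝ} {c : ℝ} (hc : 0 < c)
    (hM : ∀ v, c * ‖v‖ ^ 2 ≤ ⟪v, toEuclideanLin M v⟫) : IsUnit M.det := by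
  rw [← isUnit_iff_isUnit_det, ← mulVec_injective_iff_isUnit]
  change Function.Injective (mulVecLin M)
  rw [injective_iff_map_eq_zero]
  intro u hu
  have hv : c * ‖WithLp.toLp 2 u‖ ^ 2 ≤ ⟪WithLp.toLp 2 u, WithLp.toLp 2 (M *ᵥ u)⟫ := hM _
  rw [← mulVecLin_apply, hu, WithLp.toLp_zero, inner_zero_right] at hv
  have h0 : ‖WithLp.toLp 2 u‖ ^ 2 ≤ 0 := nonpos_of_mul_nonpos_right hv hc
  simpa using h0

theorem inner_toEuclideanLin_nonsing_inv_le {M : Matrix n n ℝ} {c : ℝ} (hc : 0 < c)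
    (hM : ∀ v, c * ‖v‖ ^ 2 ≤ ⟪v, toEuclideanLin M v⟫) (y : EuclideanSpace ℝ n) :
    ⟪y, toEuclideanLin M⁻¹ y⟫ ≤ ‖y‖ ^ 2 / c := by
  set x := toEuclideanLin M⁻¹ y
  have hx : toEuclideanLin M x = y := by
    change toEuclideanCLM (𝕜 := ℝ) M (toEuclideanCLM (𝕜 := ℝ) M⁻¹ y) = y
    rw [← mul_apply_eq_comp, ← map_mul, mul_nonsing_inv _ (isUnit_det_of_coercive hc hM), map_one,
      one_apply_eq_self]
  have hlow : c * ‖x‖ ^ 2 ≤ ⟪y, x⟫ := by simpa [hx, real_inner_comm] using hM x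
  have hup : ⟪y, x⟫ ≤ ‖y‖ * ‖x‖ := real_inner_le_norm y x
  rw [le_div_iff₀ hc]
  nlinarith [sq_nonneg (c * ‖x‖ - ‖y‖), mul_le_mul_of_nonneg_left hup hc.le]


def toEuclideanCLMₗ : Matrix n n ℝ →L[ℝ] EuclideanSpace ℝ n →L[ℝ] EuclideanSpace ℝ n :=
  LinearMap.toContinuousLinearMap (toEuclideanCLM (n := n) (𝕜 := ℝ)).toAlgEquiv.toLinearMap

@[simp]
theorem toEuclideanCLMₗ_apply_apply (M : Matrix n n ℝ) (x : EuclideanSpace ℝ n) :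
    toEuclideanCLMₗ M x = toEuclideanLin M x :=
  rfl

theorem hasFDerivAt_toEuclideanCLM {F : Type*} [NormedAddCommGroup F] [NormedSpace ℝ F]
    {A : F → Matrix n n ℝ} {A' : F →L[ℝ] Matrix n n ℝ} {z : F} (hA : HasFDerivAt A A' z) :
    HasFDerivAt (fun w => toEuclideanCLM (𝕜 := ℝ) (A w)) (toEuclideanCLMₗ.comp A') z :=
  (toEuclideanCLMₗ (n := n)).hasFDerivAt.comp z hA

end Matrix

section GradQ

open Matrix

theorem inner_gradQ {d n : ℕ} (A : EuclideanSpace ℝ (Fin d) → Matrix (Fin n) (Fin n) ℝ)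
    (b : EuclideanSpace ℝ (Fin d) → EuclideanSpace ℝ (Fin n))
    (r v : EuclideanSpace ℝ (Fin d)) (x : EuclideanSpace ℝ (Fin n)) :
    ⟪v, gradQ A b r x⟫
      = (1/2) * ⟪x, toEuclideanLin (fderiv ℝ A r v) x⟫ - ⟪fderiv ℝ b r v, x⟫ := by
  conv_rhs => rw [← (EuclideanSpace.basisFun (Fin d) ℝ).sum_repr v]
  simp only [map_sum, map_smul, LinearMap.sum_apply, LinearMap.smul_apply,
    inner_sum, sum_inner, real_inner_smul_left, real_inner_smul_right,
    EuclideanSpace.basisFun_repr, EuclideanSpace.basisFun_apply]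
  rw [PiLp.inner_apply, Finset.mul_sum, ← Finset.sum_sub_distrib]
  refine Finset.sum_congr rfl fun k _ => ?_
  simp only [gradQ, one_div, PiLp.continuousLinearEquiv_symm_apply, RCLike.inner_apply,
    Real.ringHom_apply]
  ring

theorem hasGradientAt_neg_half_inner_nonsing_inv {d n : ℕ}
    {A : EuclideanSpace ℝ (Fin d) → Matrix (Fin n) (Fin n) ℝ}
    {b : EuclideanSpace ℝ (Fin d) → EuclideanSpace ℝ (Fin n)} {r : EuclideanSpace ℝ (Fin d)}
    (hA : DifferentiableAt ℝ A r) (hb : DifferentiableAt ℝ b r) (hsymm : (A r).IsSymm)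
    (hdet : IsUnit (A r).det) :
    HasGradientAt (fun r => -(1/2) * ⟪b r, toEuclideanLin (A r)⁻¹ (b r)⟫)
      (gradQ A b r (toEuclideanLin (A r)⁻¹ (b r))) r := by
  have hinv : ∀ M : Matrix (Fin n) (Fin n) ℝ, ∀ y,
      toEuclideanLin M⁻¹ y = (toEuclideanCLM (𝕜 := ℝ) M)⁻¹ʳ y := fun M y => by
    rw [← toEuclideanCLM_nonsing_inv]; rfl
  have hunit : IsUnit (toEuclideanCLM (𝕜 := ℝ) (A r)) := (isUnit_iff_isUnit_det _ |>.2 hdet).map _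
  have hsa := (isHermitian_iff_isSymm.2 hsymm).isSelfAdjoint.map
    (toEuclideanCLM (n := Fin n) (𝕜 := ℝ))
  have hderiv := ((hasFDerivAt_toEuclideanCLM hA.hasFDerivAt).inner_ringInverse_apply
    hb.hasFDerivAt hunit hsa).const_mul (-(1/2))
  simp only [hinv]
  refine hderiv.congr_fderiv ?_
  ext v
  rw [InnerProductSpace.toDual_apply_apply, real_inner_comm, inner_gradQ]
  simp only [ContinuousLinearMap.comp_sub, ContinuousLinearMap.comp_smulₛₗ, Real.ringHom_apply,
    _root_.smul_apply, _root_.sub_apply, ContinuousLinearMap.comp_apply, coe_innerSL_apply,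
    real_inner_comm, smul_eq_mul, ContinuousLinearMap.flip_apply, toEuclideanCLMₗ_apply_apply]
  ring

end GradQ

theorem exact_dynamics_kinetic_bound_general
    (d n : ℕ)
    (tf : ℝ)
    (U : EuclideanSpace ℝ (Fin d) → ℝ) (hU : ContDiff ℝ 2 U)
    (Umin : ℝ) (hUbd : ∀ r, Umin ≤ U r)
    (b : EuclideanSpace ℝ (Fin d) → EuclideanSpace ℝ (Fin n))
    (B : ℝ) (hbbd : ∀ r, ‖b r‖ ≤ B)
    (A : EuclideanSpace ℝ (Fin d) → Matrix (Fin n) (Fin n) ℝ)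
    (hA : ContDiff ℝ 1 A) (hb : ContDiff ℝ 1 b)
    (hAsymm : ∀ r, (A r).IsSymm)
    (c : ℝ) (hc : 0 < c)
    (hApos : ∀ (r : EuclideanSpace ℝ (Fin d)) (v : EuclideanSpace ℝ (Fin n)),
      c * ‖v‖ ^ 2 ≤ ⟪v, (Matrix.toEuclideanLin (A r)) v⟫)
    -- r⋆ is a C² solution of the exact dynamics on [0, t_f]
    (rs : ℝ → EuclideanSpace ℝ (Fin d))
    (hrs : ContDiff ℝ 2 rs)
    (hode : ∀ t ∈ Icc (0:ℝ) tf,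
      deriv (deriv rs) t
        = -gradient U (rs t) - gradQ A b (rs t)
            ((Matrix.toEuclideanLin (A (rs t))⁻¹) (b (rs t))))
    -- the initial energy
    (E₀ : ℝ)
    (hE₀ : E₀ = (1/2) * ‖deriv rs 0‖ ^ 2 + U (rs 0)
        - (1/2) * ⟪b (rs 0), (Matrix.toEuclideanLin (A (rs 0))⁻¹) (b (rs 0))⟫) :
    ∀ t ∈ Icc (0:ℝ) tf,
      (1/2) * ‖deriv rs t‖ ^ 2 ≤ E₀ - Umin + B ^ 2 / (2 * c) := by
  intro t ht
  have hforce : ∀ s ∈ Icc (0:ℝ) tf,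
      HasGradientAt (fun r => U r + -(1/2) * ⟪b r, Matrix.toEuclideanLin (A r)⁻¹ (b r)⟫)
        (-deriv (deriv rs) s) (rs s) := by
    intro s hs
    rw [hode s hs, neg_sub, sub_neg_eq_add, add_comm, hasGradientAt_iff_hasFDerivAt, map_add]
    exact ((hU.differentiable two_ne_zero) _).hasGradientAt.add
      (hasGradientAt_neg_half_inner_nonsing_inv ((hA.differentiable one_ne_zero) _)
        ((hb.differentiable one_ne_zero) _) (hAsymm _) (Matrix.isUnit_det_of_coercive hc (hApos _)))
  have henergy := energy_eq_of_hasGradientAt hrs hforce t ht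
  have hcoupling : ⟪b (rs t), Matrix.toEuclideanLin (A (rs t))⁻¹ (b (rs t))⟫ ≤ B ^ 2 / c :=
    (Matrix.inner_toEuclideanLin_nonsing_inv_le hc (hApos _) _).trans <|
      div_le_div_of_nonneg_right (pow_le_pow_left₀ (norm_nonneg _) (hbbd _) 2) hc.le
  have hhalf : B ^ 2 / (2 * c) = (1/2) * (B ^ 2 / c) := by ring
  linarith [hUbd (rs t)]

theorem exact_dynamics_kinetic_bound
    (d n : ℕ) (hd : 1 ≤ d) (hn : 1 ≤ n)
    (tf : ℝ) (htf : 0 < tf)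
    (U : EuclideanSpace ℝ (Fin d) → ℝ) (hU : ContDiff ℝ 2 U)
    (Umin : ℝ) (hUbd : ∀ r, Umin ≤ U r)
    (b : EuclideanSpace ℝ (Fin d) → EuclideanSpace ℝ (Fin n))
    (B : ℝ) (hbbd : ∀ r, ‖b r‖ ≤ B)
    (A : EuclideanSpace ℝ (Fin d) → Matrix (Fin n) (Fin n) ℝ)
    (hA : ContDiff ℝ 1 A) (hb : ContDiff ℝ 1 b)
    (hAsymm : ∀ r, (A r).IsSymm)
    (c : ℝ) (hc : 0 < c)
    (hApos : ∀ (r : EuclideanSpace ℝ (Fin d)) (v : EuclideanSpace ℝ (Fin n)),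
      c * ‖v‖ ^ 2 ≤ ⟪v, (Matrix.toEuclideanLin (A r)) v⟫)
    -- r⋆ is a C² solution of the exact dynamics on [0, t_f]
    (rs : ℝ → EuclideanSpace ℝ (Fin d))
    (hrs : ContDiff ℝ 2 rs)
    (hode : ∀ t ∈ Icc (0:ℝ) tf,
      deriv (deriv rs) t
        = -gradient U (rs t) - gradQ A b (rs t)
            ((Matrix.toEuclideanLin (A (rs t))⁻¹) (b (rs t))))
    -- the initial energy
    (E₀ : ℝ)
    (hE₀ : E₀ = (1/2) * ‖deriv rs 0‖ ^ 2 + U (rs 0)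
        - (1/2) * ⟪b (rs 0), (Matrix.toEuclideanLin (A (rs 0))⁻¹) (b (rs 0))⟫) :
    ∀ t ∈ Icc (0:ℝ) tf,
      (1/2) * ‖deriv rs t‖ ^ 2 ≤ E₀ - Umin + B ^ 2 / (2 * c) :=
  exact_dynamics_kinetic_bound_general d n tf U hU Umin hUbd b B hbbd A hA hb hAsymm c hc hApos rs
    hrs hode E₀ hE₀
end
end

section
/- There exists a constant C > 0, depending only on n, c, C₀, t_f (and in particular independent of ε, s, η₀, ξ₀), such that for every ε ∈ (0,1], every s ∈ [0,t_f], every η₀, ξ₀ ∈ ℝ^n, and every t ∈ [s,t_f], the solution ỹ of the homogeneous system satisfies |ỹ(t)| ≤ C(|η₀| + ε^{1/2}|ξ₀|) and |ỹ'(t)| ≤ C(ε^{−1/2}|η₀| + |ξ₀|). -/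
/-! The energy `E(t) = ⟪y, A(t) y⟫ + ε ‖y'‖²` satisfies `E' = ⟪y, A'(t) y⟫`: the terms containing
`y''` cancel by the equation `ε y'' = -A(t) y` and the symmetry of `A(t)`. Coercivity gives
`c ‖y‖² ≤ E`, hence `E' ≤ (C₀ / c) E`, and Grönwall bounds `E(t)` by `e^{C₀ t_f / c} E(s)`, where
`E(s) ≤ max C₀ 1 · (‖η₀‖ + √ε ‖ξ₀‖)²`. Reading `‖y‖` off `c ‖y‖² ≤ E` and `‖y'‖` off
`ε ‖y'‖² ≤ E` gives the two bounds. -/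

open scoped RealInnerProductSpace
open Set

noncomputable section

attribute [local instance] Matrix.normedAddCommGroup Matrix.normedSpace

open Real

theorem le_mul_exp_of_deriv_right_le {f f' : ℝ → ℝ} {K a b : ℝ}
    (hf : ContinuousOn f (Icc a b)) (hf' : ∀ x ∈ Ico a b, HasDerivWithinAt f (f' x) (Ici x) x)
    (bound : ∀ x ∈ Ico a b, f' x ≤ K * f x) :
    ∀ x ∈ Icc a b, f x ≤ f a * exp (K * (x - a)) := by
  simpa only [gronwallBound_ε0] using le_gronwallBound_of_liminf_deriv_right_le hf
    (fun x hx _ hr => (hf' x hx).liminf_right_slope_le hr) le_rfl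
    fun x hx => (bound x hx).trans_eq (add_zero _).symm

theorem le_sqrt_div_mul_of_mul_sq_le {x b c M : ℝ} (hx : 0 ≤ x) (hb : 0 ≤ b) (hc : 0 < c)
    (h : c * x ^ 2 ≤ M * b ^ 2) : x ≤ √(M / c) * b := by
  rw [← sqrt_sq hx, ← sqrt_sq hb, ← sqrt_mul' _ (sq_nonneg b)]
  refine sqrt_le_sqrt ?_
  rw [div_mul_eq_mul_div, le_div_iff₀ hc]
  linarith

section Oscillator

variable {E : Type*} [NormedAddCommGroup E] [InnerProductSpace ℝ E]

theorem ContinuousLinearMap.real_inner_apply_self_le {L : E →L[ℝ] E} {C : ℝ} (hL : ‖L‖ ≤ C)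
    (x : E) :
    ⟪x, L x⟫ ≤ C * ‖x‖ ^ 2 :=
  calc ⟪x, L x⟫ ≤ ‖x‖ * (‖L‖ * ‖x‖) :=
        (real_inner_le_norm _ _).trans (by gcongr; exact L.le_opNorm x)
    _ ≤ C * ‖x‖ ^ 2 := by nlinarith [sq_nonneg ‖x‖]

def oscillatorEnergy (B : ℝ → E →L[ℝ] E) (ε : ℝ) (y : ℝ → E) (t : ℝ) : ℝ :=
  ⟪y t, B t (y t)⟫ + ε * ‖deriv y t‖ ^ 2

variable {B : ℝ → E →L[ℝ] E} {y : ℝ → E} {ε c : ℝ}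

theorem hasDerivAt_oscillatorEnergy {B' : E →L[ℝ] E} {y'' : E} {t : ℝ}
    (hB : HasDerivAt B B' t) (hy : HasDerivAt y (deriv y t) t)
    (hy' : HasDerivAt (deriv y) y'' t) (hsymm : (B t : E →ₗ[ℝ] E).IsSymmetric)
    (hode : ε • y'' = -B t (y t)) :
    HasDerivAt (oscillatorEnergy B ε y) ⟪y t, B' (y t)⟫ t := by
  have hforce : ε * ⟪deriv y t, y''⟫ = -⟪deriv y t, B t (y t)⟫ := by
    rw [← real_inner_smul_right, hode, inner_neg_right]
  have hsymm' : ⟪y t, B t (deriv y t)⟫ = ⟪deriv y t, B t (y t)⟫ :=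
    (hsymm _ _).symm.trans (real_inner_comm _ _)
  refine ((hy.inner ℝ (hB.clm_apply hy)).add (hy'.norm_sq.const_mul ε)).congr_deriv ?_
  rw [inner_add_right, hsymm', mul_left_comm, hforce]
  ring

theorem mul_norm_sq_le_oscillatorEnergy {t : ℝ} (hε : 0 ≤ ε)
    (hcoer : c * ‖y t‖ ^ 2 ≤ ⟪y t, B t (y t)⟫) :
    c * ‖y t‖ ^ 2 ≤ oscillatorEnergy B ε y t := by
  unfold oscillatorEnergy; nlinarith [sq_nonneg ‖deriv y t‖]

theorem oscillatorEnergy_le_exp_mul {B' : ℝ → E →L[ℝ] E} {C₀ s T : ℝ}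
    (hB : ∀ t, HasDerivAt B (B' t) t) (hB' : ∀ t ∈ Icc s T, ‖B' t‖ ≤ C₀)
    (hsymm : ∀ t ∈ Icc s T, (B t : E →ₗ[ℝ] E).IsSymmetric)
    (hcoer : ∀ t ∈ Icc s T, ∀ v, c * ‖v‖ ^ 2 ≤ ⟪v, B t v⟫) (hc : 0 < c) (hε : 0 ≤ ε)
    (hy : ContDiff ℝ 2 y) (hode : ∀ t ∈ Icc s T, ε • deriv (deriv y) t = -B t (y t)) :
    ∀ t ∈ Icc s T,
      oscillatorEnergy B ε y t ≤ oscillatorEnergy B ε y s * exp (C₀ / c * (t - s)) := by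
  have hy₁ : Differentiable ℝ y := hy.differentiable (by norm_num)
  have hy₂ : Differentiable ℝ (deriv y) := hy.differentiable_deriv_two
  have hE (t) (ht : t ∈ Icc s T) :
      HasDerivAt (oscillatorEnergy B ε y) ⟪y t, B' t (y t)⟫ t :=
    hasDerivAt_oscillatorEnergy (hB t) (hy₁ t).hasDerivAt (hy₂ t).hasDerivAt (hsymm t ht)
      (hode t ht)
  refine le_mul_exp_of_deriv_right_le (fun t ht => (hE t ht).continuousAt.continuousWithinAt)
    (fun t ht => (hE t (Ico_subset_Icc_self ht)).hasDerivWithinAt) fun t ht => ?_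
  replace ht := Ico_subset_Icc_self ht
  calc ⟪y t, B' t (y t)⟫ ≤ C₀ * ‖y t‖ ^ 2 := (B' t).real_inner_apply_self_le (hB' t ht) _
    _ = C₀ / c * (c * ‖y t‖ ^ 2) := by field_simp
    _ ≤ C₀ / c * oscillatorEnergy B ε y t := by
      gcongr
      · exact div_nonneg ((norm_nonneg _).trans (hB' t ht)) hc.le
      · exact mul_norm_sq_le_oscillatorEnergy hε (hcoer t ht _)

theorem oscillatorEnergy_le_max_mul_sq {C₀ t : ℝ} (hB : ‖B t‖ ≤ C₀) (hε : 0 ≤ ε) :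
    oscillatorEnergy B ε y t ≤ max C₀ 1 * (‖y t‖ + √ε * ‖deriv y t‖) ^ 2 := by
  have hpot := (B t).real_inner_apply_self_le (hB.trans (le_max_left C₀ 1)) (y t)
  have hkin : ε * ‖deriv y t‖ ^ 2 ≤ max C₀ 1 * (ε * ‖deriv y t‖ ^ 2) :=
    le_mul_of_one_le_left (by positivity) (le_max_right _ _)
  have hcross : ‖y t‖ ^ 2 + ε * ‖deriv y t‖ ^ 2 ≤ (‖y t‖ + √ε * ‖deriv y t‖) ^ 2 := by
    nlinarith [sq_sqrt hε,
      mul_nonneg (norm_nonneg (y t)) (mul_nonneg (sqrt_nonneg ε) (norm_nonneg (deriv y t)))]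
  unfold oscillatorEnergy
  nlinarith [mul_le_mul_of_nonneg_left hcross (zero_le_one.trans (le_max_right C₀ 1))]

theorem norm_le_of_oscillatorEnergy_le {t M a b : ℝ} (hc : 0 < c) (hε : 0 < ε)
    (hcoer : c * ‖y t‖ ^ 2 ≤ ⟪y t, B t (y t)⟫) (ha : 0 ≤ a) (hb : 0 ≤ b)
    (hE : oscillatorEnergy B ε y t ≤ M * (a + √ε * b) ^ 2) :
    ‖y t‖ ≤ √(M / c) * (a + √ε * b) ∧ ‖deriv y t‖ ≤ √M * ((√ε)⁻¹ * a + b) := by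
  have hε' : 0 < √ε := sqrt_pos.mpr hε
  refine ⟨le_sqrt_div_mul_of_mul_sq_le (norm_nonneg _) (by positivity) hc
    ((mul_norm_sq_le_oscillatorEnergy hε.le hcoer).trans hE), ?_⟩
  have hkin : ε * ‖deriv y t‖ ^ 2 ≤ oscillatorEnergy B ε y t := by
    unfold oscillatorEnergy; nlinarith [sq_nonneg ‖y t‖]
  calc ‖deriv y t‖ ≤ √(M / ε) * (a + √ε * b) :=
        le_sqrt_div_mul_of_mul_sq_le (norm_nonneg _) (by positivity) hε (hkin.trans hE)
    _ = √M * ((√ε)⁻¹ * a + b) := by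
      rw [sqrt_div' _ hε.le]; field_simp

end Oscillator

theorem Matrix.hasDerivAt_toEuclideanCLM {ι : Type*} [Fintype ι] [DecidableEq ι]
    {A : ℝ → Matrix ι ι ℝ} {t : ℝ} (hA : DifferentiableAt ℝ A t) :
    HasDerivAt (fun t => toEuclideanCLM (𝕜 := ℝ) (A t)) (toEuclideanCLM (𝕜 := ℝ) (deriv A t)) t :=
  (LinearMap.toContinuousLinearMap (toEuclideanCLM (n := ι) (𝕜 := ℝ)).toAlgEquiv.toLinearMap)
    |>.hasFDerivAt.comp_hasDerivAt t hA.hasDerivAt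

theorem homogeneous_flow_map_bounds_general
    (n : ℕ)
    (tf : ℝ)
    (c C₀ : ℝ) (hc : 0 < c) (hC₀ : 0 < C₀) :
    -- the constant C depends only on n, c, C₀, t_f
    ∃ C > 0, ∀ A : ℝ → Matrix (Fin n) (Fin n) ℝ,
      ContDiff ℝ 1 A →
      (∀ t ∈ Icc (0:ℝ) tf, (A t).IsSymm) →
      (∀ t ∈ Icc (0:ℝ) tf, ∀ v : EuclideanSpace ℝ (Fin n),
        c * ‖v‖ ^ 2 ≤ ⟪v, (Matrix.toEuclideanLin (A t)) v⟫) →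
      (∀ t ∈ Icc (0:ℝ) tf,
        ‖Matrix.toEuclideanCLM (𝕜 := ℝ) (A t)‖
          + ‖Matrix.toEuclideanCLM (𝕜 := ℝ) (deriv A t)‖ ≤ C₀) →
      ∀ ε ∈ Ioc (0:ℝ) 1, ∀ s ∈ Icc (0:ℝ) tf,
      ∀ (η₀ ξ₀ : EuclideanSpace ℝ (Fin n)) (y : ℝ → EuclideanSpace ℝ (Fin n)),
      -- y is the C² solution of the homogeneous system with data (s, η₀, ξ₀)
      ContDiff ℝ 2 y →
      (∀ t ∈ Icc s tf,
        ε • deriv (deriv y) t = -(Matrix.toEuclideanLin (A t)) (y t)) →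
      y s = η₀ → deriv y s = ξ₀ →
      ∀ t ∈ Icc s tf,
        ‖y t‖ ≤ C * (‖η₀‖ + Real.sqrt ε * ‖ξ₀‖) ∧
        ‖deriv y t‖ ≤ C * ((Real.sqrt ε)⁻¹ * ‖η₀‖ + ‖ξ₀‖) := by
  set M := max C₀ 1 * exp (C₀ / c * tf)
  refine ⟨√(M / c) + √M, by positivity, ?_⟩
  intro A hA hsymm hcoer hbound ε hε s hs _ _ y hy hode rfl rfl t ht
  simp only [← Matrix.coe_toEuclideanCLM_eq_toEuclideanLin, ContinuousLinearMap.coe_coe]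
    at hcoer hode
  have hsub : Icc s tf ⊆ Icc 0 tf := Icc_subset_Icc_left hs.1
  have hgrowth := oscillatorEnergy_le_exp_mul
    (fun t => Matrix.hasDerivAt_toEuclideanCLM (hA.differentiable one_ne_zero t))
    (fun t ht => (le_add_of_nonneg_left (norm_nonneg _)).trans (hbound t (hsub ht)))
    (fun t ht => Matrix.isSymmetric_toEuclideanLin_iff.mpr
      (Matrix.isHermitian_iff_isSymm.mpr (hsymm t (hsub ht))))
    (fun t ht => hcoer t (hsub ht)) hc hε.1.le hy hode t ht
  have hinit := oscillatorEnergy_le_max_mul_sq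
    (B := fun t => Matrix.toEuclideanCLM (𝕜 := ℝ) (A t)) (y := y)
    ((le_add_of_nonneg_right (norm_nonneg _)).trans (hbound s hs)) hε.1.le
  have hexp : exp (C₀ / c * (t - s)) ≤ exp (C₀ / c * tf) :=
    exp_le_exp.mpr (by gcongr; linarith [hs.1, ht.2])
  obtain ⟨hpos, hvel⟩ := norm_le_of_oscillatorEnergy_le (M := M) hc hε.1 (hcoer t (hsub ht) (y t))
    (norm_nonneg _) (norm_nonneg _)
    (hgrowth.trans <| (mul_le_mul hinit hexp (exp_pos _).le (by positivity)).trans_eq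
      (mul_right_comm _ _ _))
  exact ⟨hpos.trans (by gcongr; exact le_add_of_nonneg_right (sqrt_nonneg _)),
    hvel.trans (by gcongr; exact le_add_of_nonneg_left (sqrt_nonneg _))⟩

theorem homogeneous_flow_map_bounds
    (n : ℕ) (hn : 1 ≤ n)
    (tf : ℝ) (htf : 0 < tf)
    (c C₀ : ℝ) (hc : 0 < c) (hC₀ : 0 < C₀) :
    -- the constant C depends only on n, c, C₀, t_f
    ∃ C > 0, ∀ A : ℝ → Matrix (Fin n) (Fin n) ℝ,
      ContDiff ℝ 1 A →
      (∀ t ∈ Icc (0:ℝ) tf, (A t).IsSymm) →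
      (∀ t ∈ Icc (0:ℝ) tf, ∀ v : EuclideanSpace ℝ (Fin n),
        c * ‖v‖ ^ 2 ≤ ⟪v, (Matrix.toEuclideanLin (A t)) v⟫) →
      (∀ t ∈ Icc (0:ℝ) tf,
        ‖Matrix.toEuclideanCLM (𝕜 := ℝ) (A t)‖
          + ‖Matrix.toEuclideanCLM (𝕜 := ℝ) (deriv A t)‖ ≤ C₀) →
      ∀ ε ∈ Ioc (0:ℝ) 1, ∀ s ∈ Icc (0:ℝ) tf,
      ∀ (η₀ ξ₀ : EuclideanSpace ℝ (Fin n)) (y : ℝ → EuclideanSpace ℝ (Fin n)),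
      -- y is the C² solution of the homogeneous system with data (s, η₀, ξ₀)
      ContDiff ℝ 2 y →
      (∀ t ∈ Icc s tf,
        ε • deriv (deriv y) t = -(Matrix.toEuclideanLin (A t)) (y t)) →
      y s = η₀ → deriv y s = ξ₀ →
      ∀ t ∈ Icc s tf,
        ‖y t‖ ≤ C * (‖η₀‖ + Real.sqrt ε * ‖ξ₀‖) ∧
        ‖deriv y t‖ ≤ C * ((Real.sqrt ε)⁻¹ * ‖η₀‖ + ‖ξ₀‖) :=
  homogeneous_flow_map_bounds_general n tf c C₀ hc hC₀

end
end
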